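/- Set s(x) = q(x)·q(−x−1)/(x·(x+1)·(1+2x)²) ∈ ℂ(x). In ℂ(x)#ℤ, the elements A and B satisfy the generalized Weyl algebra relations B·A = s(x), A·B = s(x−1), A·g(x) = g(x−1)·A and B·g(x) = g(x+1)·B for all g ∈ ℂ(x); moreover ℂ(x)#ℤ is generated as a ℂ-algebra by ℂ(x) ∪ {A, B}, and the automorphism τ satisfies τ(A) = B, τ(B) = A. -/
import Mathlib


noncomputable section

open Polynomial

namespace KleinD

/-- The three generators of the free algebra. -/
def U : FreeAlgebra ℂ (Fin 3) := FreeAlgebra.ι ℂ 0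
def V : FreeAlgebra ℂ (Fin 3) := FreeAlgebra.ι ℂ 1
def W : FreeAlgebra ℂ (Fin 3) := FreeAlgebra.ι ℂ 2

/-- ρ = 2 q(-1/2). -/
def rho (q : ℂ[X]) : ℂ := 2 * q.eval (-(1/2 : ℂ))

/-- The condition that p₀, p₁ satisfy `(1+2t)² (p₀(t²) + p₁(t²) t) = -4 q(t) q(-t-1) + ρ²`. -/
def pCond (q p₀ p₁ : ℂ[X]) : Prop :=
  (1 + 2 * X) ^ 2 * (p₀.comp (X ^ 2) + p₁.comp (X ^ 2) * X)
    = -4 * q * q.comp (-X - 1) + C (rho q) ^ 2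

/-- The defining relations of `D(q)`. -/
inductive DqRel (q p₀ p₁ : ℂ[X]) : FreeAlgebra ℂ (Fin 3) → FreeAlgebra ℂ (Fin 3) → Prop
  | rel1 : DqRel q p₀ p₁ (U * V - V * U) (2 * W + V)
  | rel2 : DqRel q p₀ p₁ (U * W - W * U)
      (2 * V * U + W + algebraMap ℂ (FreeAlgebra ℂ (Fin 3)) (rho q))
  | rel3 : DqRel q p₀ p₁ (V * W - W * V) (-(V * V) - Polynomial.aeval U p₁)
  | rel4 : DqRel q p₀ p₁ (W * W)
      (V * V * U + V * W + algebraMap ℂ (FreeAlgebra ℂ (Fin 3)) (rho q) * V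
        + Polynomial.aeval U p₀)

/-- The noncommutative type D Kleinian singularity `D(q)`. -/
abbrev Dq (q p₀ p₁ : ℂ[X]) := RingQuot (DqRel q p₀ p₁)

def uD (q p₀ p₁ : ℂ[X]) : Dq q p₀ p₁ := RingQuot.mkAlgHom ℂ (DqRel q p₀ p₁) U
def vD (q p₀ p₁ : ℂ[X]) : Dq q p₀ p₁ := RingQuot.mkAlgHom ℂ (DqRel q p₀ p₁) V
def wD (q p₀ p₁ : ℂ[X]) : Dq q p₀ p₁ := RingQuot.mkAlgHom ℂ (DqRel q p₀ p₁) W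

/-- `ℂ(x)`, the field of rational functions. -/
abbrev L := RatFunc ℂ

/-- `x ∈ ℂ(x)`. -/
def xL : L := RatFunc.X

/-- The ℂ-algebra automorphism `τ` of ℂ(x), determined by `x ↦ -x`. -/
def tauL : L ≃ₐ[ℂ] L :=
  IsFractionRing.algEquivOfAlgEquiv (Polynomial.algEquivAevalNegX (R := ℂ))

/-- The ℂ-algebra automorphism `δ` of ℂ(x), determined by `x ↦ x - 1`. -/
def deltaL : L ≃ₐ[ℂ] L :=
  IsFractionRing.algEquivOfAlgEquiv (Polynomial.algEquivAevalXAddC (-1 : ℂ))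

/-- Left multiplication by a rational function, as a ℂ-linear endomorphism of ℂ(x). -/
def mulE (f : L) : Module.End ℂ L := Algebra.lmul ℂ L f

/-- `δ` as an endomorphism: `g(x) ↦ g(x-1)`. -/
def deltaE : Module.End ℂ L := deltaL.toLinearMap
/-- `δ⁻¹` as an endomorphism: `g(x) ↦ g(x+1)`. -/
def deltaInvE : Module.End ℂ L := deltaL.symm.toLinearMap
/-- `τ` as an endomorphism: `g(x) ↦ g(-x)`. -/
def tauE : Module.End ℂ L := tauL.toLinearMap

/-- The skew group algebra `ℂ(x)#ℤ`, realized (via its faithful action on `ℂ(x)`) as the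
subalgebra of `End_ℂ(ℂ(x))` generated by all multiplication operators `f·` together with
the shift automorphisms `δ` and `δ⁻¹`; its elements are exactly the finite sums
`Σ fₖ δᵏ`. -/
def CxZ : Subalgebra ℂ (Module.End ℂ L) :=
  Algebra.adjoin ℂ (Set.range mulE ∪ {deltaE, deltaInvE})

/-- `q(x) ∈ ℂ(x)` for a polynomial `q`. -/
def pol (q : ℂ[X]) : L := algebraMap ℂ[X] L q

/-- The constant rational function `c`. -/
def cst (c : ℂ) : L := algebraMap ℂ L c

/-- The image of `φ(u) = x²`. -/
def phiU : Module.End ℂ L := mulE (xL ^ 2)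

/-- The prescribed value of `φ(-v-w)`. -/
def phiMVW (q : ℂ[X]) : Module.End ℂ L :=
  (1/2 : ℂ) • (mulE (pol q / (cst (1/2) + xL)) * deltaInvE
    + mulE (tauL (pol q) / (cst (1/2) - xL)) * deltaE
    - mulE (cst (q.eval (-(1/2 : ℂ))) / ((cst (1/2) + xL) * (cst (1/2) - xL))))

/-- The prescribed value of `φ(-(1/2)v-w)`. -/
def phiMHVW (q : ℂ[X]) : Module.End ℂ L :=
  (1/2 : ℂ) • (mulE (pol q / xL) * deltaInvE - mulE (tauL (pol q) / xL) * deltaE)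

end KleinD

namespace KleinD

/-- The rational function `f(x) = ½·q(-x)/((-x)(½-x))`. -/
def fRat (q : ℂ[X]) : L := (cst (1/2) * tauL (pol q)) / ((-xL) * (cst (1/2) - xL))

/-- `A = f(x)·δ`. -/
def AE (q : ℂ[X]) : Module.End ℂ L := mulE (fRat q) * deltaE

/-- `B = f(-x)·δ⁻¹`. -/
def BE (q : ℂ[X]) : Module.End ℂ L := mulE (tauL (fRat q)) * deltaInvE

end KleinD

namespace KleinD

/-- The rational function `s(x) = q(x)q(-x-1)/(x(x+1)(1+2x)²)`. -/
def sRat (q : ℂ[X]) : L :=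
  (pol q * pol (q.comp (-Polynomial.X - 1))) / (xL * (xL + 1) * (1 + 2 * xL) ^ 2)

end KleinD


namespace KleinD

-- ### Auxiliary lemmas

instance : CharZero L := charZero_of_injective_algebraMap (algebraMap ℂ L).injective

lemma pol_ne_zero {p : ℂ[X]} (hp : p ≠ 0) : pol p ≠ 0 := fun h =>
  hp (IsFractionRing.injective ℂ[X] L (by simpa [pol] using h))

lemma ne_zero_of_eval {p : ℂ[X]} (h : p.eval 0 ≠ 0) : pol p ≠ 0 :=
  pol_ne_zero fun hp => h (by simp [hp])

lemma tauL_pol (p : ℂ[X]) : tauL (pol p) = pol (p.comp (-X)) := by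
  rw [tauL, pol, IsFractionRing.algEquivOfAlgEquiv_algebraMap]
  simp [pol, comp_eq_aeval]

lemma deltaL_pol (p : ℂ[X]) : deltaL (pol p) = pol (p.comp (X - 1)) := by
  rw [deltaL, pol, IsFractionRing.algEquivOfAlgEquiv_algebraMap]
  simp [pol, comp_eq_aeval, sub_eq_add_neg]

lemma deltaLsymm_pol (p : ℂ[X]) : deltaL.symm (pol p) = pol (p.comp (X + 1)) := by
  rw [deltaL, pol, IsFractionRing.algEquivOfAlgEquiv_symm,
    IsFractionRing.algEquivOfAlgEquiv_algebraMap]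
  simp [pol, comp_eq_aeval]

lemma Lext {f g : L →+* L} (h : ∀ p : ℂ[X], f (pol p) = g (pol p)) (z : L) : f z = g z :=
  RingHom.congr_fun
    (IsLocalization.ringHom_ext (nonZeroDivisors ℂ[X]) (RingHom.ext h)) z

lemma xL_pol : xL = pol X := by rw [xL, pol, RatFunc.algebraMap_X]

lemma cst_pol (c : ℂ) : cst c = pol (C c) := by
  rw [cst, pol, IsScalarTower.algebraMap_apply ℂ ℂ[X] L, Polynomial.algebraMap_eq]

lemma tauL_x : tauL xL = -xL := by
  rw [xL_pol, tauL_pol]; simp [pol]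

lemma deltaLsymm_x : deltaL.symm xL = xL + 1 := by
  rw [xL_pol, deltaLsymm_pol]; simp [pol]

lemma tauL_cst (c : ℂ) : tauL (cst c) = cst c := tauL.commutes c

lemma deltaLsymm_cst (c : ℂ) : deltaL.symm (cst c) = cst c := deltaL.symm.commutes c

lemma tauL_tauL (z : L) : tauL (tauL z) = z := by
  have := Lext (f := (tauL : L →+* L).comp (tauL : L →+* L)) (g := RingHom.id L)
    (fun p => by
      simp only [RingHom.comp_apply, RingHom.id_apply, RingHom.coe_coe, tauL_pol,
        comp_neg_X_comp_neg_X]) z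
  simpa using this

lemma tau_delta_tau (z : L) : tauL (deltaL (tauL z)) = deltaL.symm z := by
  have := Lext
    (f := (tauL : L →+* L).comp (((deltaL : L →+* L)).comp (tauL : L →+* L)))
    (g := (deltaL.symm : L →+* L))
    (fun p => by
      simp only [RingHom.comp_apply, RingHom.coe_coe, tauL_pol, deltaL_pol, deltaLsymm_pol]
      congr 1
      rw [comp_assoc, comp_assoc]
      congr 1
      simp only [neg_comp, X_comp, sub_comp, one_comp]
      ring) z
  simpa using this

lemma tau_deltaInv_tau (z : L) : tauL (deltaL.symm (tauL z)) = deltaL z := by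
  have := Lext
    (f := (tauL : L →+* L).comp (((deltaL.symm : L →+* L)).comp (tauL : L →+* L)))
    (g := (deltaL : L →+* L))
    (fun p => by
      simp only [RingHom.comp_apply, RingHom.coe_coe, tauL_pol, deltaL_pol, deltaLsymm_pol]
      congr 1
      rw [comp_assoc, comp_assoc]
      congr 1
      simp only [neg_comp, X_comp, add_comp, one_comp]
      ring) z
  simpa using this

-- ### Endomorphism lemmas

lemma mulE_apply (f h : L) : mulE f h = f * h := rfl

lemma mulE_mul (a b : L) : mulE (a * b) = mulE a * mulE b := map_mul (Algebra.lmul ℂ L) a b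

lemma mulE_one : mulE 1 = 1 := map_one (Algebra.lmul ℂ L)

lemma deltaE_mulE (g : L) : deltaE * mulE g = mulE (deltaL g) * deltaE :=
  LinearMap.ext fun h => by
    simp [deltaE, mulE_apply, Module.End.mul_apply, map_mul]

lemma deltaInvE_mulE (g : L) : deltaInvE * mulE g = mulE (deltaL.symm g) * deltaInvE :=
  LinearMap.ext fun h => by
    simp [deltaInvE, mulE_apply, Module.End.mul_apply, map_mul]

lemma tauE_mulE (g : L) : tauE * mulE g = mulE (tauL g) * tauE :=
  LinearMap.ext fun h => by
    simp [tauE, mulE_apply, Module.End.mul_apply, map_mul]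

lemma deltaE_deltaInvE : deltaE * deltaInvE = 1 :=
  LinearMap.ext fun h => by
    simp [deltaE, deltaInvE, Module.End.mul_apply]

lemma deltaInvE_deltaE : deltaInvE * deltaE = 1 :=
  LinearMap.ext fun h => by
    simp [deltaE, deltaInvE, Module.End.mul_apply]

lemma tauE_deltaE_tauE : tauE * deltaE * tauE = deltaInvE :=
  LinearMap.ext fun h => by
    simpa [tauE, deltaE, deltaInvE, Module.End.mul_apply] using tau_delta_tau h

lemma tauE_deltaInvE_tauE : tauE * deltaInvE * tauE = deltaE :=
  LinearMap.ext fun h => by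
    simpa [tauE, deltaE, deltaInvE, Module.End.mul_apply] using tau_deltaInv_tau h

lemma sandwich (a b : L) : (mulE a * deltaE) * (mulE b * deltaInvE) = mulE (a * deltaL b) := by
  calc (mulE a * deltaE) * (mulE b * deltaInvE)
      = mulE a * ((deltaE * mulE b) * deltaInvE) := by rw [mul_assoc, mul_assoc]
    _ = mulE a * (mulE (deltaL b) * (deltaE * deltaInvE)) := by rw [deltaE_mulE, mul_assoc]
    _ = mulE (a * deltaL b) := by rw [deltaE_deltaInvE, mul_one, mulE_mul]

lemma sandwich' (a b : L) :
    (mulE a * deltaInvE) * (mulE b * deltaE) = mulE (a * deltaL.symm b) := by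
  calc (mulE a * deltaInvE) * (mulE b * deltaE)
      = mulE a * ((deltaInvE * mulE b) * deltaE) := by rw [mul_assoc, mul_assoc]
    _ = mulE a * (mulE (deltaL.symm b) * (deltaInvE * deltaE)) := by
        rw [deltaInvE_mulE, mul_assoc]
    _ = mulE (a * deltaL.symm b) := by rw [deltaInvE_deltaE, mul_one, mulE_mul]

-- ### The key rational-function identity

lemma hcomp (q : ℂ[X]) : (q.comp (-X)).comp (X + 1) = q.comp (-X - 1) := by
  rw [comp_assoc]
  congr 1
  simp only [neg_comp, X_comp]
  ring

lemma cst_half : cst (1/2 : ℂ) = (1/2 : L) := by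
  simp [cst, map_div₀, map_ofNat]

lemma hx : xL ≠ 0 := by rw [xL]; exact RatFunc.X_ne_zero

lemma hx1 : xL + 1 ≠ 0 := by
  have h : xL + 1 = pol (X + 1) := by simp [pol, xL_pol]
  rw [h]
  exact ne_zero_of_eval (by simp)

lemma h2x : 1 + 2 * xL ≠ 0 := by
  have h : 1 + 2 * xL = pol (1 + 2 * X) := by simp [pol, xL_pol, map_ofNat]
  rw [h]
  exact ne_zero_of_eval (by simp)

lemma h2x' : 1 - 2 * xL ≠ 0 := by
  have h : 1 - 2 * xL = pol (1 - 2 * X) := by simp [pol, xL_pol, map_ofNat]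
  rw [h]
  exact ne_zero_of_eval (by simp)

lemma key (q : ℂ[X]) : tauL (fRat q) * deltaL.symm (fRat q) = sRat q := by
  have h1 : tauL (fRat q) = (cst (1/2) * pol q) / (xL * (cst (1/2) + xL)) := by
    rw [fRat, map_div₀, map_mul, map_mul, map_sub, map_neg, tauL_x, tauL_cst,
      tauL_tauL]
    ring_nf
  have h2 : deltaL.symm (fRat q) =
      (cst (1/2) * pol (q.comp (-X - 1))) / ((-(xL + 1)) * (cst (1/2) - (xL + 1))) := by
    rw [fRat, map_div₀, map_mul, map_mul, map_sub, map_neg, deltaLsymm_x,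
      deltaLsymm_cst, tauL_pol, deltaLsymm_pol, hcomp]
  rw [h1, h2, sRat, cst_half]
  have hh1 : (1/2 : L) + xL ≠ 0 := fun h => h2x (by linear_combination (2:L) * h)
  have hh2 : (1/2 : L) - (xL + 1) ≠ 0 := fun h => h2x (by linear_combination (-2:L) * h)
  rw [div_mul_div_comm, div_eq_div_iff
    (mul_ne_zero (mul_ne_zero hx hh1) (mul_ne_zero (neg_ne_zero.mpr hx1) hh2))
    (mul_ne_zero (mul_ne_zero hx hx1) (pow_ne_zero 2 h2x))]
  ring

end KleinD

open KleinD in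
/-- In `ℂ(x)#ℤ` the elements `A = f(x)δ` and `B = f(-x)δ⁻¹` satisfy the
generalized Weyl algebra relations `BA = s(x)`, `AB = s(x-1)`, `A·g(x) = g(x-1)·A`,
`B·g(x) = g(x+1)·B`; moreover `ℂ(x)#ℤ` is generated as a ℂ-algebra by `ℂ(x) ∪ {A, B}`,
and `τ(A) = B`, `τ(B) = A`. -/
theorem statement14 (q : Polynomial ℂ) (hq : 4 ≤ q.natDegree) :
    BE q * AE q = mulE (sRat q)
    ∧ AE q * BE q = mulE (deltaL (sRat q))
    ∧ (∀ g : L, AE q * mulE g = mulE (deltaL g) * AE q)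
    ∧ (∀ g : L, BE q * mulE g = mulE (deltaL.symm g) * BE q)
    ∧ Algebra.adjoin ℂ (Set.range mulE ∪ {AE q, BE q}) = CxZ
    ∧ tauE * AE q * tauE = BE q
    ∧ tauE * BE q * tauE = AE q := by
  have hq0 : q ≠ 0 := fun h => by simp [h] at hq
  have hτq : tauL (pol q) ≠ 0 := by
    rw [tauL_pol]
    refine pol_ne_zero fun h => hq0 ?_
    have h2 := congrArg (fun p => Polynomial.comp p (-X)) h
    simpa [comp_neg_X_comp_neg_X] using h2
  have hf : fRat q ≠ 0 := by
    rw [fRat]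
    refine div_ne_zero (mul_ne_zero ?_ hτq)
      (mul_ne_zero (neg_ne_zero.mpr hx) fun h => h2x' ?_)
    · rw [cst_half]; norm_num
    · rw [cst_half] at h; linear_combination (2:L) * h
  have hτf : tauL (fRat q) ≠ 0 := fun h => hf (by
    rw [← tauL_tauL (fRat q), h, map_zero])
  have hAg : ∀ g : L, AE q * mulE g = mulE (deltaL g) * AE q := by
    intro g
    calc AE q * mulE g = mulE (fRat q) * (deltaE * mulE g) := by rw [AE, mul_assoc]
      _ = mulE (fRat q) * (mulE (deltaL g) * deltaE) := by rw [deltaE_mulE]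
      _ = mulE (fRat q * deltaL g) * deltaE := by rw [← mul_assoc, ← mulE_mul]
      _ = mulE (deltaL g * fRat q) * deltaE := by rw [mul_comm (fRat q)]
      _ = mulE (deltaL g) * AE q := by rw [mulE_mul, AE, mul_assoc]
  have hBg : ∀ g : L, BE q * mulE g = mulE (deltaL.symm g) * BE q := by
    intro g
    calc BE q * mulE g = mulE (tauL (fRat q)) * (deltaInvE * mulE g) := by
          rw [BE, mul_assoc]
      _ = mulE (tauL (fRat q)) * (mulE (deltaL.symm g) * deltaInvE) := by
          rw [deltaInvE_mulE]
      _ = mulE (tauL (fRat q) * deltaL.symm g) * deltaInvE := by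
          rw [← mul_assoc, ← mulE_mul]
      _ = mulE (deltaL.symm g * tauL (fRat q)) * deltaInvE := by
          rw [mul_comm (tauL (fRat q))]
      _ = mulE (deltaL.symm g) * BE q := by rw [mulE_mul, BE, mul_assoc]
  have hdeltaE : deltaE = mulE (fRat q)⁻¹ * AE q := by
    rw [AE, ← mul_assoc, ← mulE_mul, inv_mul_cancel₀ hf, mulE_one, one_mul]
  have hdeltaInvE : deltaInvE = mulE (tauL (fRat q))⁻¹ * BE q := by
    rw [BE, ← mul_assoc, ← mulE_mul, inv_mul_cancel₀ hτf, mulE_one, one_mul]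
  refine ⟨?_, ?_, hAg, hBg, ?_, ?_, ?_⟩
  · rw [BE, AE, sandwich']
    exact congrArg mulE (key q)
  · rw [AE, BE, sandwich]
    refine congrArg mulE ?_
    rw [← key, map_mul, AlgEquiv.apply_symm_apply, mul_comm]
  · apply le_antisymm
    · refine Algebra.adjoin_le fun e he => ?_
      rcases he with he | he
      · exact Algebra.subset_adjoin (Or.inl he)
      · have hdE : deltaE ∈ CxZ := Algebra.subset_adjoin (Or.inr (by simp))
        have hdIE : deltaInvE ∈ CxZ := Algebra.subset_adjoin (Or.inr (by simp))
        rcases he with rfl | he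
        · exact mul_mem (Algebra.subset_adjoin (Or.inl ⟨_, rfl⟩)) hdE
        · rw [Set.mem_singleton_iff] at he
          subst he
          exact mul_mem (Algebra.subset_adjoin (Or.inl ⟨_, rfl⟩)) hdIE
    · refine Algebra.adjoin_le fun e he => ?_
      have hA : AE q ∈ Algebra.adjoin ℂ (Set.range mulE ∪ {AE q, BE q}) :=
        Algebra.subset_adjoin (Or.inr (by simp))
      have hB : BE q ∈ Algebra.adjoin ℂ (Set.range mulE ∪ {AE q, BE q}) :=
        Algebra.subset_adjoin (Or.inr (by simp))
      rcases he with he | he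
      · exact Algebra.subset_adjoin (Or.inl he)
      · rcases he with rfl | he
        · rw [hdeltaE]
          exact mul_mem (Algebra.subset_adjoin (Or.inl ⟨_, rfl⟩)) hA
        · rw [Set.mem_singleton_iff] at he
          subst he
          rw [hdeltaInvE]
          exact mul_mem (Algebra.subset_adjoin (Or.inl ⟨_, rfl⟩)) hB
  · calc tauE * AE q * tauE = (tauE * mulE (fRat q)) * (deltaE * tauE) := by
          rw [AE]; noncomm_ring
      _ = (mulE (tauL (fRat q)) * tauE) * (deltaE * tauE) := by rw [tauE_mulE]
      _ = mulE (tauL (fRat q)) * (tauE * deltaE * tauE) := by noncomm_ring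
      _ = BE q := by rw [tauE_deltaE_tauE, BE]
  · calc tauE * BE q * tauE = (tauE * mulE (tauL (fRat q))) * (deltaInvE * tauE) := by
          rw [BE]; noncomm_ring
      _ = (mulE (tauL (tauL (fRat q))) * tauE) * (deltaInvE * tauE) := by rw [tauE_mulE]
      _ = mulE (fRat q) * (tauE * deltaInvE * tauE) := by
          rw [tauL_tauL]; noncomm_ring
      _ = AE q := by rw [tauE_deltaInvE_tauE, AE]
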